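/- arXiv:1602.07432 — 2 statements merged into one kernel-verified Lean document; each statement's English description precedes it below -/
import Mathlib

section
/- The number of phylogenetic trees on n ≥ 1 labelled leaves fixed by a given permutation σ is zero unless the cycle type of σ is a binary partition, i.e., every cycle of σ has length a power of 2. -/
universe u
variable {α β : Type u}

/-- Rooted binary trees with labelled leaves (embedded). -/
inductive RTree (α : Type u) : Type u
  | leaf : α → RTree α
  | node : RTree α → RTree α → RTree α

namespace RTree

def relabel (f : α → β) : RTree α → RTree β
  | .leaf a => .leaf (f a)
  | .node l r => .node (l.relabel f) (r.relabel f)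

def leaves : RTree α → Multiset α
  | .leaf a => {a}
  | .node l r => l.leaves + r.leaves

/-- Identification of non-embedded trees: the two children of a node are unordered. -/
inductive TEquiv : RTree α → RTree α → Prop
  | leaf (a : α) : TEquiv (.leaf a) (.leaf a)
  | node {l r l' r'} : TEquiv l l' → TEquiv r r' → TEquiv (.node l r) (.node l' r')
  | swap {l r l' r'} : TEquiv l r' → TEquiv r l' → TEquiv (.node l r) (.node l' r')

theorem TEquiv.leaves_eq {t t' : RTree α} (h : TEquiv t t') : t.leaves = t'.leaves := by
  induction h with
  | leaf a => rfl
  | node _ _ ih1 ih2 => simp [leaves, ih1, ih2]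
  | swap _ _ ih1 ih2 => simp [leaves, ih1, ih2, add_comm]

theorem TEquiv.relabel_congr (f : α → β) {t t' : RTree α} (h : TEquiv t t') :
    TEquiv (t.relabel f) (t'.relabel f) := by
  induction h with
  | leaf a => exact .leaf _
  | node _ _ ih1 ih2 => exact .node ih1 ih2
  | swap _ _ ih1 ih2 => exact .swap ih1 ih2

end RTree

/-- Phylogenetic (rooted, non-embedded, leaf-labelled) trees with labels in `α`. -/
def PTree (α : Type u) : Type u := Quot (@RTree.TEquiv α)

namespace PTree

def leaves : PTree α → Multiset α :=
  Quot.lift RTree.leaves fun _ _ h => h.leaves_eq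

def relabel (f : α → α) : PTree α → PTree α :=
  Quot.lift (fun t => Quot.mk _ (t.relabel f)) fun _ _ h => Quot.sound (h.relabel_congr f)

end PTree

/-- The phylogenetic trees with leaf label set `A` that are fixed by the relabelling
action of `σ`. -/
def fixedTrees (σ : Equiv.Perm α) (A : Finset α) : Set (PTree α) :=
  {t | t.leaves = A.val ∧ t.relabel σ = t}

/-- The orbit (cycle) of `a` under the permutation `σ`, as a finset. -/
noncomputable def orbitF [Fintype α] (σ : Equiv.Perm α) (a : α) : Finset α := by
  classical exact Finset.univ.filter fun x => σ.SameCycle a x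

/-- `∏_{i=2}^{ℓ} (2(λ_i + ⋯ + λ_ℓ) - 1)` where the parts `λ_1 ≥ λ_2 ≥ ⋯ ≥ λ_ℓ` are the
elements of `m` in non-increasing order: equivalently, the factors are `2 s - 1` where `s`
runs over the sums of the `j` smallest parts, `j = 1, …, ℓ - 1`. -/
def prodFormula (m : Multiset ℕ) : ℕ :=
  ∏ j ∈ Finset.range (m.card - 1), (2 * ((m.sort (· ≤ ·)).take (j + 1)).sum - 1)

/-- `z_λ = ∏_m m^{m_m} · m_m!` where `m_m` is the multiplicity of `m`. -/
def zPart (m : Multiset ℕ) : ℕ :=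
  ∏ p ∈ m.toFinset, p ^ m.count p * (m.count p).factorial

namespace RTree

theorem TEquiv.refl : ∀ t : RTree α, TEquiv t t
  | .leaf a => .leaf a
  | .node l r => .node (TEquiv.refl l) (TEquiv.refl r)

theorem TEquiv.symm {t t' : RTree α} (h : TEquiv t t') : TEquiv t' t := by
  induction h with
  | leaf a => exact .leaf a
  | node _ _ ih1 ih2 => exact .node ih1 ih2
  | swap _ _ ih1 ih2 => exact .swap ih2 ih1

theorem TEquiv.trans {t1 t2 t3 : RTree α} (h : TEquiv t1 t2) (h' : TEquiv t2 t3) :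
    TEquiv t1 t3 := by
  induction h generalizing t3 with
  | leaf a => exact h'
  | node _ _ ih1 ih2 =>
    cases h' with
    | node g1 g2 => exact .node (ih1 g1) (ih2 g2)
    | swap g1 g2 => exact .swap (ih1 g1) (ih2 g2)
  | swap _ _ ih1 ih2 =>
    cases h' with
    | node g1 g2 => exact .swap (ih1 g2) (ih2 g1)
    | swap g1 g2 => exact .node (ih1 g2) (ih2 g1)

theorem TEquiv.equivalence : Equivalence (@TEquiv α) :=
  ⟨TEquiv.refl, TEquiv.symm, TEquiv.trans⟩

theorem relabel_relabel (f g : α → α) (t : RTree α) :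
    (t.relabel f).relabel g = t.relabel (g ∘ f) := by
  induction t with
  | leaf a => rfl
  | node l r ihl ihr => simp [relabel, ihl, ihr]

/-- Key lemma: if `σ` fixes `t` (up to `TEquiv`), then every leaf label of `t`
has period dividing a power of two under `σ`. -/
theorem pow_two_period (t : RTree α) (σ : Equiv.Perm α)
    (h : TEquiv (t.relabel σ) t) :
    ∀ a ∈ t.leaves, ∃ k : ℕ, (σ ^ (2 ^ k)) a = a := by
  induction t generalizing σ with
  | leaf b =>
    intro a ha
    rw [leaves, Multiset.mem_singleton] at ha
    subst ha
    have hb : σ a = a := by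
      have := h.leaves_eq
      simpa [relabel, leaves] using this
    exact ⟨0, by simpa [pow_one] using hb⟩
  | node l r ihl ihr =>
    cases h with
    | node h1 h2 =>
      intro a ha
      rw [leaves, Multiset.mem_add] at ha
      rcases ha with ha | ha
      · exact ihl σ h1 a ha
      · exact ihr σ h2 a ha
    | swap h1 h2 =>
      -- h1 : TEquiv (l.relabel σ) r, h2 : TEquiv (r.relabel σ) l
      have hl2 : TEquiv (l.relabel ⇑(σ * σ)) l := by
        have : (l.relabel ⇑(σ * σ)) = (l.relabel σ).relabel σ := by
          rw [relabel_relabel]; rfl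
        rw [this]
        exact (h1.relabel_congr σ).trans h2
      have hr2 : TEquiv (r.relabel ⇑(σ * σ)) r := by
        have : (r.relabel ⇑(σ * σ)) = (r.relabel σ).relabel σ := by
          rw [relabel_relabel]; rfl
        rw [this]
        exact (h2.relabel_congr σ).trans h1
      intro a ha
      rw [leaves, Multiset.mem_add] at ha
      have key : ∀ b : α, (∃ k, ((σ * σ) ^ (2 ^ k)) b = b) → ∃ k, (σ ^ (2 ^ k)) b = b := by
        rintro b ⟨k, hk⟩
        refine ⟨k + 1, ?_⟩
        have : (σ * σ) ^ (2 ^ k) = σ ^ (2 ^ (k + 1)) := by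
          rw [← sq, ← pow_mul, pow_succ, mul_comm]
        rwa [this] at hk
      rcases ha with ha | ha
      · exact key a (ihl (σ * σ) hl2 a ha)
      · exact key a (ihr (σ * σ) hr2 a ha)

end RTree

/-- The number of phylogenetic trees fixed by σ is zero unless the cycle
type of σ is a binary partition (every cycle length a power of 2). -/
theorem stmt5 {α : Type} [Fintype α] [DecidableEq α] (hα : Nonempty α)
    (σ : Equiv.Perm α)
    (hnotbin : ¬ ∀ p ∈ σ.partition.parts, ∃ k : ℕ, p = 2 ^ k) :
    (fixedTrees σ Finset.univ).ncard = 0 := by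
  classical
  suffices hempty : fixedTrees σ Finset.univ = ∅ by
    rw [hempty, Set.ncard_empty]
  by_contra hne
  rcases Set.nonempty_iff_ne_empty.2 hne with ⟨t, hleaves, hfix⟩
  obtain ⟨r, rfl⟩ := Quot.exists_rep t
  -- hfix : relabel σ (Quot.mk _ r) = Quot.mk _ r
  have hq : Quot.mk _ (r.relabel σ) = Quot.mk RTree.TEquiv r := hfix
  have hteq : RTree.TEquiv (r.relabel σ) r := by
    rw [Quot.eq] at hq
    exact (RTree.TEquiv.equivalence.eqvGen_iff).1 hq
  have hall : ∀ a : α, ∃ k : ℕ, (σ ^ (2 ^ k)) a = a := by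
    intro a
    apply RTree.pow_two_period r σ hteq
    have : r.leaves = (Finset.univ : Finset α).val := hleaves
    rw [this]
    exact Finset.mem_univ a
  apply hnotbin
  intro p hp
  rw [Equiv.Perm.parts_partition, Multiset.mem_add] at hp
  rcases hp with hp | hp
  · -- p is a cycle length
    rw [Equiv.Perm.cycleType_def, Multiset.mem_map] at hp
    obtain ⟨c, hc, hcard⟩ := hp
    have hcyc : c.IsCycle := (Equiv.Perm.mem_cycleFactorsFinset_iff.1 hc).1
    obtain ⟨a, ha⟩ := hcyc.nonempty_support
    have hcof : c = σ.cycleOf a := Equiv.Perm.cycle_is_cycleOf ha hc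
    obtain ⟨k, hk⟩ := hall a
    have hc1 : (c ^ (2 ^ k)) a = a := by
      rw [hcof, Equiv.Perm.cycleOf_pow_apply_self]
      exact hk
    have hone : c ^ (2 ^ k) = 1 := (hcyc.pow_eq_one_iff' (Equiv.Perm.mem_support.1 ha)).2 hc1
    have hdvd : orderOf c ∣ 2 ^ k := orderOf_dvd_of_pow_eq_one hone
    rw [hcyc.orderOf] at hdvd
    have hdvd' : p ∣ 2 ^ k := hcard ▸ hdvd
    obtain ⟨j, _, hj⟩ := (Nat.dvd_prime_pow Nat.prime_two).1 hdvd'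
    exact ⟨j, hj⟩
  · exact ⟨0, by simpa using Multiset.eq_of_mem_replicate hp⟩
end

section
/- Let σ be a permutation of A with more than one cycle, all cycle lengths powers of 2, and let γ be a σ-fixed phylogenetic tree on A. Fix a largest cycle c of σ. Then the maximal c-vertices of γ (vertices all of whose descendant leaves are labelled by elements of c, maximal under the descendant relation) form a single σ-cycle of vertices of size 2^i for some i ≤ k, where 2^k = |c|, and within each attached c-subtree, σ^{2^i} cyclically permutes its 2^{k−i} leaves. -/
universe u
variable {α β : Type u}

/-- The leaf-label multisets of all subtrees of an (embedded representative of a)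
phylogenetic tree; since leaf labels are distinct, vertices of the tree (each vertex
taken with its hanging subtree) are faithfully encoded by their descendant-leaf sets. -/
def subtreeLeaves {α : Type} : RTree α → Set (Multiset α)
  | .leaf a => {{a}}
  | .node l r => insert (RTree.leaves (.node l r)) (subtreeLeaves l ∪ subtreeLeaves r)

section Helpers

open Function

namespace RTree

theorem leaves_relabel {α β : Type u} (f : α → β) (t : RTree α) :
    (t.relabel f).leaves = t.leaves.map f := by
  induction t with
  | leaf a => rfl
  | node l r ihl ihr => simp [relabel, leaves, ihl, ihr]

theorem leaves_ne_zero {α : Type u} (t : RTree α) : t.leaves ≠ 0 := by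
  induction t with
  | leaf a => simp [leaves]
  | node l r ihl ihr =>
    show l.leaves + r.leaves ≠ 0
    intro h
    have : l.leaves = 0 := by
      have := congrArg Multiset.card h
      simp only [Multiset.card_add, Multiset.card_zero, Nat.add_eq_zero] at this
      exact Multiset.card_eq_zero.mp this.1
    exact ihl this


end RTree

theorem subtreeLeaves_le {α : Type} (t : RTree α) : ∀ m ∈ subtreeLeaves t, m ≤ t.leaves := by
  induction t with
  | leaf a => intro m hm; rw [show subtreeLeaves (.leaf a) = {({a} : Multiset α)} from rfl] at hm
              rw [hm]; rfl
  | node l r ihl ihr =>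
    intro m hm
    rcases hm with h | h | h
    · exact le_of_eq h
    · exact le_trans (ihl m h) (Multiset.le_add_right _ _)
    · exact le_trans (ihr m h) (Multiset.le_add_left _ _)

theorem subtreeLeaves_ne_zero {α : Type} (t : RTree α) : ∀ m ∈ subtreeLeaves t, m ≠ 0 := by
  induction t with
  | leaf a => intro m hm; rw [show subtreeLeaves (.leaf a) = {({a} : Multiset α)} from rfl] at hm
              rw [hm]; simp
  | node l r ihl ihr =>
    intro m hm
    rcases hm with h | h | h
    · rw [h]; exact RTree.leaves_ne_zero _
    · exact ihl m h
    · exact ihr m h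

theorem singleton_mem_subtreeLeaves {α : Type} (t : RTree α) :
    ∀ x ∈ t.leaves, ({x} : Multiset α) ∈ subtreeLeaves t := by
  induction t with
  | leaf a => intro x hx
              rw [show RTree.leaves (.leaf a) = ({a} : Multiset α) from rfl] at hx
              rw [Multiset.mem_singleton] at hx
              rw [hx]; exact rfl
  | node l r ihl ihr =>
    intro x hx
    rw [show RTree.leaves (.node l r) = l.leaves + r.leaves from rfl, Multiset.mem_add] at hx
    rcases hx with h | h
    · exact Or.inr (Or.inl (ihl x h))
    · exact Or.inr (Or.inr (ihr x h))

theorem subtreeLeaves_finite {α : Type} (t : RTree α) : (subtreeLeaves t).Finite := by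
  induction t with
  | leaf a => exact Set.finite_singleton _
  | node l r ihl ihr => exact Set.Finite.insert _ (ihl.union ihr)

theorem subtreeLeaves_relabel {α : Type} (f : α → α) (t : RTree α) :
    subtreeLeaves (t.relabel f) = (Multiset.map f) '' subtreeLeaves t := by
  induction t with
  | leaf a => simp [RTree.relabel, subtreeLeaves]
  | node l r ihl ihr =>
    show insert _ _ = _
    rw [show subtreeLeaves (RTree.node l r) = insert (RTree.leaves (.node l r))
          (subtreeLeaves l ∪ subtreeLeaves r) from rfl]
    rw [Set.image_insert_eq, Set.image_union, ihl, ihr]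
    congr 1
    show RTree.leaves (.node (l.relabel f) (r.relabel f)) = _
    rw [show RTree.leaves (.node (l.relabel f) (r.relabel f))
          = (l.relabel f).leaves + (r.relabel f).leaves from rfl,
        show RTree.leaves (.node l r) = l.leaves + r.leaves from rfl,
        RTree.leaves_relabel, RTree.leaves_relabel, Multiset.map_add]

theorem TEquiv_subtreeLeaves_eq {α : Type} {t t' : RTree α} (h : RTree.TEquiv t t') :
    subtreeLeaves t = subtreeLeaves t' := by
  induction h with
  | leaf a => rfl
  | node h1 h2 ih1 ih2 =>
    show insert _ _ = insert _ _
    rw [ih1, ih2, (RTree.TEquiv.node h1 h2).leaves_eq]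
  | swap h1 h2 ih1 ih2 =>
    show insert _ _ = insert _ _
    rw [ih1, ih2, (RTree.TEquiv.swap h1 h2).leaves_eq, Set.union_comm]

theorem subtreeLeaves_laminar {α : Type} {t : RTree α} (h : t.leaves.Nodup) :
    ∀ m ∈ subtreeLeaves t, ∀ m' ∈ subtreeLeaves t,
      m ≤ m' ∨ m' ≤ m ∨ ∀ x ∈ m, x ∉ m' := by
  induction t with
  | leaf a =>
    intro m hm m' hm'
    rw [show subtreeLeaves (.leaf a) = {({a} : Multiset α)} from rfl] at hm hm'
    rw [Set.mem_singleton_iff] at hm hm'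
    exact Or.inl (hm.trans hm'.symm ▸ le_rfl)
  | node l r ihl ihr =>
    rw [show RTree.leaves (.node l r) = l.leaves + r.leaves from rfl,
        Multiset.nodup_add] at h
    obtain ⟨hl, hr, hdisj⟩ := h
    intro m hm m' hm'
    have hml : ∀ s ∈ subtreeLeaves l, s ≤ l.leaves := subtreeLeaves_le l
    have hmr : ∀ s ∈ subtreeLeaves r, s ≤ r.leaves := subtreeLeaves_le r
    rcases hm with hm | hm | hm
    · right; left
      rw [hm]
      exact subtreeLeaves_le _ m' hm'
    · rcases hm' with hm' | hm' | hm'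
      · left
        rw [hm']
        exact le_trans (hml m hm) (Multiset.le_add_right _ _)
      · exact ihl hl m hm m' hm'
      · right; right
        intro x hx hx'
        exact Multiset.disjoint_left.mp hdisj (Multiset.mem_of_le (hml m hm) hx)
          (Multiset.mem_of_le (hmr m' hm') hx')
    · rcases hm' with hm' | hm' | hm'
      · left
        rw [hm']
        exact le_trans (hmr m hm) (Multiset.le_add_left _ _)
      · right; right
        intro x hx hx'
        exact Multiset.disjoint_left.mp hdisj (Multiset.mem_of_le (hml m' hm') hx')
          (Multiset.mem_of_le (hmr m hm) hx)
      · exact ihr hr m hm m' hm'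

end Helpers
section Helpers2

open Function

/-- Extend a member of a finite family to a maximal one below `c`. -/
theorem exists_maximal_multiset {α : Type} {S : Set (Multiset α)} (hfin : S.Finite)
    {m0 c : Multiset α} (h0 : m0 ∈ S) (hc : m0 ≤ c) :
    ∃ m ∈ S, m0 ≤ m ∧ m ≤ c ∧ ∀ m' ∈ S, m ≤ m' → m' ≤ c → m' = m := by
  set T : Set (Multiset α) := {m | m ∈ S ∧ m0 ≤ m ∧ m ≤ c} with hT
  have hTfin : T.Finite := hfin.subset fun m hm => hm.1
  have hTne : T.Nonempty := ⟨m0, h0, le_rfl, hc⟩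
  obtain ⟨m, hm, hmax0⟩ := Set.Finite.exists_maximalFor Multiset.card T hTfin hTne
  have hmax : ∀ m' ∈ T, Multiset.card m ≤ Multiset.card m' → Multiset.card m = Multiset.card m' :=
    fun m' h h' => le_antisymm h' (hmax0 h h')
  refine ⟨m, hm.1, hm.2.1, hm.2.2, ?_⟩
  intro m' hm'S hle hlec
  have hm'T : m' ∈ T := ⟨hm'S, le_trans hm.2.1 hle, hlec⟩
  have hcard := hmax m' hm'T (Multiset.card_le_card hle)
  exact (Multiset.eq_of_le_of_card_le hle (le_of_eq hcard.symm)).symm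

theorem perm_map_le_iff {α : Type u} (σ : Equiv.Perm α) {m s : Multiset α} :
    m.map ⇑σ ≤ s.map ⇑σ ↔ m ≤ s := by
  constructor
  · intro h
    have := Multiset.map_le_map (f := ⇑σ⁻¹) h
    simpa [Multiset.map_map] using this
  · exact Multiset.map_le_map

theorem perm_map_iterate {α : Type u} (f : α → α) (j : ℕ) :
    ∀ m : Multiset α, (fun s : Multiset α => s.map f)^[j] m = m.map f^[j] := by
  induction j with
  | zero => intro m; simp
  | succ n ih =>
    intro m
    rw [Function.iterate_succ_apply, ih, Multiset.map_map, ← Function.iterate_succ]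

theorem mem_orbitF_iff {α : Type u} [Fintype α] {σ : Equiv.Perm α} {a x : α} :
    x ∈ orbitF σ a ↔ σ.SameCycle a x := by
  classical
  rw [orbitF]
  simp

theorem perm_mem_periodicPts {α : Type u} [Fintype α] (σ : Equiv.Perm α) (x : α) :
    x ∈ Function.periodicPts ⇑σ := by
  refine ⟨orderOf σ, orderOf_pos σ, ?_⟩
  show (⇑σ)^[orderOf σ] x = x
  rw [Equiv.Perm.iterate_eq_pow, pow_orderOf_eq_one]
  rfl

theorem sameCycle_exists_nat {α : Type u} [Fintype α] {σ : Equiv.Perm α} {x y : α}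
    (h : σ.SameCycle x y) : ∃ j : ℕ, (⇑σ)^[j] x = y := by
  obtain ⟨i, _, hi⟩ := h.exists_pow_eq'
  exact ⟨i, by rw [Equiv.Perm.iterate_eq_pow]; exact hi⟩

theorem orbitF_eq_image {α : Type u} [Fintype α] [DecidableEq α] (σ : Equiv.Perm α) (a : α) :
    orbitF σ a = (Finset.range (Function.minimalPeriod ⇑σ a)).image (fun j => (⇑σ)^[j] a) := by
  have hP : 0 < Function.minimalPeriod ⇑σ a :=
    Function.minimalPeriod_pos_of_mem_periodicPts (perm_mem_periodicPts σ a)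
  ext y
  rw [mem_orbitF_iff, Finset.mem_image]
  constructor
  · intro h
    obtain ⟨j, hj⟩ := sameCycle_exists_nat h
    refine ⟨j % Function.minimalPeriod ⇑σ a, Finset.mem_range.mpr (Nat.mod_lt _ hP), ?_⟩
    rw [Function.iterate_mod_minimalPeriod_eq]
    exact hj
  · rintro ⟨j, _, rfl⟩
    exact ⟨(j : ℤ), by rw [zpow_natCast, ← Equiv.Perm.iterate_eq_pow]⟩

theorem orbitF_card_eq {α : Type u} [Fintype α] [DecidableEq α] (σ : Equiv.Perm α) (a : α) :
    (orbitF σ a).card = Function.minimalPeriod ⇑σ a := by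
  rw [orbitF_eq_image]
  rw [Finset.card_image_of_injOn, Finset.card_range]
  intro i hi j hj hij
  exact Function.iterate_injOn_Iio_minimalPeriod (by simpa using hi) (by simpa using hj) hij

theorem minimalPeriod_of_mem_orbitF {α : Type u} [Fintype α] [DecidableEq α] (σ : Equiv.Perm α)
    {a x : α} (hx : x ∈ orbitF σ a) :
    Function.minimalPeriod ⇑σ x = Function.minimalPeriod ⇑σ a := by
  obtain ⟨j, rfl⟩ := sameCycle_exists_nat (mem_orbitF_iff.mp hx)
  exact Function.minimalPeriod_apply_iterate (perm_mem_periodicPts σ a) j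

theorem orbitF_map_val {α : Type u} [Fintype α] [DecidableEq α] (σ : Equiv.Perm α) (a : α) :
    (orbitF σ a).val.map ⇑σ = (orbitF σ a).val := by
  have hsub : ∀ x ∈ (orbitF σ a).val.map ⇑σ, x ∈ (orbitF σ a).val := by
    intro x hx
    rw [Multiset.mem_map] at hx
    obtain ⟨y, hy, rfl⟩ := hx
    have : σ.SameCycle a y := mem_orbitF_iff.mp hy
    exact mem_orbitF_iff.mpr (Equiv.Perm.sameCycle_apply_right.mpr this)
  have hnd : ((orbitF σ a).val.map ⇑σ).Nodup := (orbitF σ a).nodup.map σ.injective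
  have hle : (orbitF σ a).val.map ⇑σ ≤ (orbitF σ a).val :=
    (Multiset.le_iff_subset hnd).mpr hsub
  exact Multiset.eq_of_le_of_card_le hle (by simp)

end Helpers2

/-- Let σ have more than one cycle, all cycle lengths powers of 2, let
γ be a σ-fixed phylogenetic tree on A, and let c be a largest cycle of σ, of size 2^k.
Then the maximal c-vertices of γ (encoded by their descendant-leaf sets: the subtree leaf
sets contained in c and maximal such) form a single σ-orbit of size 2^i for some i ≤ k,
and in each corresponding c-subtree, σ^{2^i} fixes the leaf set of size 2^{k−i} and
permutes its leaves cyclically. -/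
theorem stmt14 {α : Type} [Fintype α] [DecidableEq α] (σ : Equiv.Perm α)
    (hbin : ∀ b, ∃ t : ℕ, (orbitF σ b).card = 2 ^ t)
    (γ : RTree α) (hleaves : γ.leaves = (Finset.univ : Finset α).val)
    (hfix : RTree.TEquiv (γ.relabel σ) γ)
    (a : α) (k : ℕ) (hk : (orbitF σ a).card = 2 ^ k)
    (hmax : ∀ b, (orbitF σ b).card ≤ 2 ^ k)
    (hmulti : orbitF σ a ≠ Finset.univ)
    (c : Finset α) (hc : c = orbitF σ a)
    (M : Set (Multiset α))
    (hM : M = {m | m ∈ subtreeLeaves γ ∧ m ≤ c.val ∧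
      ∀ m' ∈ subtreeLeaves γ, m ≤ m' → m' ≤ c.val → m' = m}) :
    ∃ i ≤ k,
      M.ncard = 2 ^ i ∧
      (∀ m ∈ M, m.map ⇑σ ∈ M) ∧
      (∀ m ∈ M, ∀ m' ∈ M, ∃ j : ℕ, m.map ⇑(σ ^ j) = m') ∧
      (∀ m ∈ M, Multiset.card m = 2 ^ (k - i) ∧
        m.map ⇑(σ ^ 2 ^ i) = m ∧
        ∀ x ∈ m, ∀ y ∈ m, ∃ j : ℕ, ((σ ^ 2 ^ i) ^ j) x = y) := by
  classical
  have hnodup : γ.leaves.Nodup := by rw [hleaves]; exact Finset.univ.nodup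
  have hSfin := subtreeLeaves_finite γ
  have hlam := subtreeLeaves_laminar (t := γ) hnodup
  have hSinv : (Multiset.map ⇑σ) '' subtreeLeaves γ = subtreeLeaves γ := by
    rw [← subtreeLeaves_relabel]; exact TEquiv_subtreeLeaves_eq hfix
  have hmapS : ∀ m ∈ subtreeLeaves γ, m.map ⇑σ ∈ subtreeLeaves γ := by
    intro m hm; rw [← hSinv]; exact ⟨m, hm, rfl⟩
  have hmapS' : ∀ m : Multiset α, m.map ⇑σ ∈ subtreeLeaves γ → m ∈ subtreeLeaves γ := by
    intro m hm
    rw [← hSinv] at hm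
    obtain ⟨m1, hm1, heq⟩ := hm
    rwa [← Multiset.map_injective σ.injective heq]
  -- facts about c
  have hcval : c.val.map ⇑σ = c.val := by rw [hc]; exact orbitF_map_val σ a
  have hcvalinv : c.val.map ⇑σ⁻¹ = c.val := by
    conv_lhs => rw [← hcval]
    rw [Multiset.map_map]; simp
  have hPa : Function.minimalPeriod ⇑σ a = 2 ^ k := by
    rw [← orbitF_card_eq σ a]; exact hk
  have hxper : ∀ x ∈ c, Function.minimalPeriod ⇑σ x = 2 ^ k := by
    intro x hx; rw [hc] at hx
    rw [minimalPeriod_of_mem_orbitF σ hx, hPa]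
  have hfix2k : ∀ x ∈ c, (⇑σ)^[2 ^ k] x = x := by
    intro x hx
    conv_lhs => rw [← hxper x hx]
    exact Function.iterate_minimalPeriod
  have hdvd2k : ∀ x ∈ c, ∀ n : ℕ, (⇑σ)^[n] x = x → 2 ^ k ∣ n := by
    intro x hx n hn
    rw [← hxper x hx]
    exact Function.IsPeriodicPt.minimalPeriod_dvd hn
  have hsame : ∀ x ∈ c, ∀ y ∈ c, ∃ t : ℕ, (⇑σ)^[t] x = y := by
    intro x hx y hy
    rw [hc] at hx hy
    exact sameCycle_exists_nat ((mem_orbitF_iff.mp hx).symm.trans (mem_orbitF_iff.mp hy))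
  -- facts about M
  have hMS : ∀ m ∈ M, m ∈ subtreeLeaves γ ∧ m ≤ c.val ∧
      ∀ m' ∈ subtreeLeaves γ, m ≤ m' → m' ≤ c.val → m' = m := by
    intro m hm; rw [hM] at hm; exact hm
  have hMsubc : ∀ m ∈ M, ∀ x ∈ m, x ∈ c := fun m hm x hx =>
    Finset.mem_val.mp (Multiset.mem_of_le (hMS m hm).2.1 hx)
  have hMnodup : ∀ m ∈ M, m.Nodup := fun m hm =>
    Multiset.nodup_of_le (hMS m hm).2.1 c.nodup
  have hMne : ∀ m ∈ M, ∃ x, x ∈ m := fun m hm =>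
    Multiset.exists_mem_of_ne_zero (subtreeLeaves_ne_zero γ m (hMS m hm).1)
  have hMmap : ∀ m ∈ M, m.map ⇑σ ∈ M := by
    intro m hm
    obtain ⟨h1, h2, h3⟩ := hMS m hm
    rw [hM]
    refine ⟨hmapS m h1, ?_, ?_⟩
    · calc m.map ⇑σ ≤ c.val.map ⇑σ := Multiset.map_le_map h2
        _ = c.val := hcval
    · intro m' hm'S hle' hlec
      have e1 : (m'.map ⇑σ⁻¹).map ⇑σ = m' := by rw [Multiset.map_map]; simp
      have h1' : m'.map ⇑σ⁻¹ ∈ subtreeLeaves γ := hmapS' _ (by rw [e1]; exact hm'S)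
      have h2' : m ≤ m'.map ⇑σ⁻¹ := by
        rw [← perm_map_le_iff σ, e1]; exact hle'
      have h3' : m'.map ⇑σ⁻¹ ≤ c.val :=
        calc m'.map ⇑σ⁻¹ ≤ c.val.map ⇑σ⁻¹ := Multiset.map_le_map hlec
          _ = c.val := hcvalinv
      have hfin := h3 _ h1' h2' h3'
      rw [← hfin, e1]
  have hMeq : ∀ m ∈ M, ∀ m' ∈ M, ∀ x, x ∈ m → x ∈ m' → m = m' := by
    intro m hm m' hm' x hx hx'
    rcases hlam m (hMS m hm).1 m' (hMS m' hm').1 with h | h | h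
    · exact ((hMS m hm).2.2 m' (hMS m' hm').1 h (hMS m' hm').2.1).symm
    · exact (hMS m' hm').2.2 m (hMS m hm).1 h (hMS m hm).2.1
    · exact absurd hx' (h x hx)
  have hMpow : ∀ (j : ℕ), ∀ m ∈ M, m.map ((⇑σ)^[j]) ∈ M := by
    intro j
    induction j with
    | zero => intro m hm; simpa using hm
    | succ n ih =>
      intro m hm
      have h := ih (m.map ⇑σ) (hMmap m hm)
      rwa [Multiset.map_map, ← Function.iterate_succ] at h
  -- M is nonempty
  have hac : a ∈ c := by
    rw [hc]; exact mem_orbitF_iff.mpr (Equiv.Perm.SameCycle.refl σ a)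
  have haleaf : ({a} : Multiset α) ∈ subtreeLeaves γ :=
    singleton_mem_subtreeLeaves γ a (by rw [hleaves]; exact Finset.mem_val.mpr (Finset.mem_univ a))
  obtain ⟨m0, hm0S, _, hm0c, hm0max⟩ :=
    exists_maximal_multiset hSfin haleaf (Multiset.singleton_le.mpr (Finset.mem_val.mpr hac))
  have hm0 : m0 ∈ M := by rw [hM]; exact ⟨hm0S, hm0c, hm0max⟩
  -- block transitivity
  have htrans : ∀ m ∈ M, ∀ m' ∈ M, ∃ j : ℕ, m.map ((⇑σ)^[j]) = m' := by
    intro m hm m' hm'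
    obtain ⟨x, hx⟩ := hMne m hm
    obtain ⟨y, hy⟩ := hMne m' hm'
    obtain ⟨t, ht⟩ := hsame x (hMsubc m hm x hx) y (hMsubc m' hm' y hy)
    refine ⟨t, ?_⟩
    have hmem : y ∈ m.map ((⇑σ)^[t]) := by
      rw [← ht]; exact Multiset.mem_map_of_mem _ hx
    exact hMeq _ (hMpow t m hm) m' hm' y hmem hy
  -- the action on blocks
  set F : Multiset α → Multiset α := fun s => s.map ⇑σ with hF
  have hFiter : ∀ (j : ℕ) (s : Multiset α), F^[j] s = s.map ((⇑σ)^[j]) :=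
    fun j s => perm_map_iterate ⇑σ j s
  have hFper : ∀ m ∈ M, F^[2 ^ k] m = m := by
    intro m hm
    rw [hFiter]
    have h : ∀ x ∈ m, (⇑σ)^[2 ^ k] x = x := fun x hx => hfix2k x (hMsubc m hm x hx)
    calc m.map ((⇑σ)^[2 ^ k]) = m.map id := Multiset.map_congr rfl h
      _ = m := Multiset.map_id m
  have hm0p : m0 ∈ Function.periodicPts F := ⟨2 ^ k, pow_pos two_pos k, hFper m0 hm0⟩
  set N := Function.minimalPeriod F m0 with hN
  have hNpos : 0 < N :=
    Function.minimalPeriod_pos_of_mem_periodicPts hm0p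
  have hNdvd : N ∣ 2 ^ k := Function.IsPeriodicPt.minimalPeriod_dvd (hFper m0 hm0)
  obtain ⟨i, hik, hNi⟩ := (Nat.dvd_prime_pow Nat.prime_two).mp hNdvd
  set O : Finset (Multiset α) := (Finset.range N).image (fun j => F^[j] m0) with hO
  have hOcard : O.card = N := by
    rw [hO, Finset.card_image_of_injOn, Finset.card_range]
    intro i1 h1 i2 h2 h12
    exact Function.iterate_injOn_Iio_minimalPeriod (by simpa [hN] using h1)
      (by simpa [hN] using h2) h12
  have hMO : M = ↑O := by
    ext m'
    constructor
    · intro hm'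
      obtain ⟨t, ht⟩ := htrans m0 hm0 m' hm'
      rw [← hFiter] at ht
      have h : F^[t % N] m0 = m' := by
        rw [hN, Function.iterate_mod_minimalPeriod_eq]; exact ht
      exact Finset.mem_coe.mpr (Finset.mem_image.mpr
        ⟨t % N, Finset.mem_range.mpr (Nat.mod_lt _ hNpos), h⟩)
    · intro hm'
      obtain ⟨j, _, rfl⟩ := Finset.mem_image.mp (Finset.mem_coe.mp hm')
      rw [hFiter]
      exact hMpow j m0 hm0
  have hMcard : M.ncard = 2 ^ i := by rw [hMO, Set.ncard_coe_finset, hOcard, hNi]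
  have hmper : ∀ m ∈ M, Function.minimalPeriod F m = N := by
    intro m hm
    rw [hMO] at hm
    obtain ⟨j, _, rfl⟩ := Finset.mem_image.mp (Finset.mem_coe.mp hm)
    rw [Function.minimalPeriod_apply_iterate hm0p j]
  have hmfixN : ∀ m ∈ M, m.map ((⇑σ)^[N]) = m := by
    intro m hm
    rw [← hFiter, ← hmper m hm]
    exact Function.iterate_minimalPeriod
  have hblockdvd : ∀ m ∈ M, ∀ t : ℕ, m.map ((⇑σ)^[t]) = m → N ∣ t := by
    intro m hm t ht
    rw [← hmper m hm]
    refine Function.IsPeriodicPt.minimalPeriod_dvd ?_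
    show F^[t] m = m
    rw [hFiter]; exact ht
  -- internal structure of each block
  have hblock : ∀ m ∈ M, Multiset.card m = 2 ^ (k - i) ∧
      m.map ((⇑σ)^[2 ^ i]) = m ∧
      ∀ x ∈ m, ∀ y ∈ m, ∃ j : ℕ, (⇑σ)^[2 ^ i * j] x = y := by
    intro m hm
    have hfixi : m.map ((⇑σ)^[2 ^ i]) = m := by rw [← hNi]; exact hmfixN m hm
    set τ : α → α := (⇑σ)^[2 ^ i] with hτ
    have hτiter : ∀ u : ℕ, τ^[u] = (⇑σ)^[2 ^ i * u] :=
      fun u => (Function.iterate_mul ⇑σ (2 ^ i) u).symm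
    have hτm : ∀ z ∈ m, τ z ∈ m := by
      intro z hz
      have h : τ z ∈ m.map τ := Multiset.mem_map_of_mem τ hz
      rwa [hfixi] at h
    have h2ksplit : 2 ^ i * 2 ^ (k - i) = 2 ^ k := by
      rw [← pow_add]; congr 1; omega
    have hcover : ∀ x' ∈ m, ∀ y ∈ m, ∃ u : ℕ, τ^[u] x' = y := by
      intro x' hx' y hy
      obtain ⟨t, ht⟩ := hsame x' (hMsubc m hm x' hx') y (hMsubc m hm y hy)
      have hmem : y ∈ m.map ((⇑σ)^[t]) := by
        rw [← ht]; exact Multiset.mem_map_of_mem _ hx'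
      have heqm : m.map ((⇑σ)^[t]) = m := hMeq _ (hMpow t m hm) m hm y hmem hy
      obtain ⟨u, rfl⟩ := hblockdvd m hm t heqm
      refine ⟨u, ?_⟩
      rw [hτiter, ← hNi]
      exact ht
    obtain ⟨x, hx⟩ := hMne m hm
    have hxc : x ∈ c := hMsubc m hm x hx
    have hτmem : ∀ u : ℕ, τ^[u] x ∈ m := by
      intro u; induction u with
      | zero => simpa using hx
      | succ n ih => rw [Function.iterate_succ_apply']; exact hτm _ ih
    have hτperiodic : Function.IsPeriodicPt τ (2 ^ (k - i)) x := by
      show τ^[2 ^ (k - i)] x = x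
      rw [hτiter, h2ksplit]
      exact hfix2k x hxc
    have hQ : Function.minimalPeriod τ x = 2 ^ (k - i) := by
      apply Nat.dvd_antisymm
      · exact Function.IsPeriodicPt.minimalPeriod_dvd hτperiodic
      · have hq := Function.iterate_minimalPeriod (f := τ) (x := x)
        rw [hτiter] at hq
        have hd := hdvd2k x hxc _ hq
        rw [← h2ksplit] at hd
        exact (Nat.mul_dvd_mul_iff_left (pow_pos two_pos i)).mp hd
    have htofin : m.toFinset = (Finset.range (2 ^ (k - i))).image (fun u => τ^[u] x) := by
      ext y
      rw [Multiset.mem_toFinset, Finset.mem_image]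
      constructor
      · intro hy
        obtain ⟨u, hu⟩ := hcover x hx y hy
        refine ⟨u % 2 ^ (k - i), Finset.mem_range.mpr (Nat.mod_lt _ (pow_pos two_pos _)), ?_⟩
        rw [← hQ, Function.iterate_mod_minimalPeriod_eq]
        exact hu
      · rintro ⟨u, _, rfl⟩
        exact hτmem u
    have hcard : Multiset.card m = 2 ^ (k - i) := by
      rw [← Multiset.toFinset_card_of_nodup (hMnodup m hm), htofin,
        Finset.card_image_of_injOn, Finset.card_range]
      intro u1 h1 u2 h2 h12
      exact Function.iterate_injOn_Iio_minimalPeriod (by simpa [hQ] using h1)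
        (by simpa [hQ] using h2) h12
    refine ⟨hcard, hfixi, ?_⟩
    intro x' hx' y hy
    obtain ⟨u, hu⟩ := hcover x' hx' y hy
    exact ⟨u, by rw [← hτiter]; exact hu⟩
  -- assemble
  refine ⟨i, hik, hMcard, hMmap, ?_, ?_⟩
  · intro m hm m' hm'
    obtain ⟨j, hj⟩ := htrans m hm m' hm'
    exact ⟨j, by rw [← Equiv.Perm.iterate_eq_pow]; exact hj⟩
  · intro m hm
    obtain ⟨hcard, hfixi, hcyc⟩ := hblock m hm
    refine ⟨hcard, by rw [← Equiv.Perm.iterate_eq_pow]; exact hfixi, ?_⟩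
    intro x hx y hy
    obtain ⟨j, hj⟩ := hcyc x hx y hy
    refine ⟨j, ?_⟩
    show ((σ ^ 2 ^ i) ^ j) x = y
    rw [← Equiv.Perm.iterate_eq_pow, ← Equiv.Perm.iterate_eq_pow, ← Function.iterate_mul]
    exact hj
end
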